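/- Let J : [0,1] → Mat_n(ℝ) solve J''(t) + R(t)J(t) = 0 with J(0) = 0 and J'(0) = I, where ‖R(t)‖ ≤ C for all t ∈ [0,1]. Then ‖J(1) − I‖ ≤ C·e^C. -/

import Mathlib

/-!
Gronwall's inequality for the first-order system `(J, J')' = (J', -R J)`, whose right-hand side
has norm at most `K = max 1 C` times that of `(J, J')`, gives `‖J t‖ ≤ exp (K t)`. Hence
`‖J''‖ ≤ C exp (K t)`, and integrating twice from `J 0 = 0`, `J' 0 = 1` gives
`‖J 1 - 1‖ ≤ C (exp K - 1 - K) / K ^ 2`, which is at most `C exp C` in both cases `K = 1`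
(as `e - 2 ≤ 1`) and `K = C`.
-/

open Set Real

section MeanValue

variable {E : Type*} [NormedAddCommGroup E] [NormedSpace ℝ E]

theorem norm_le_of_hasDerivAt_of_norm_deriv_le {f f' : ℝ → E} {B B' : ℝ → ℝ} {a b : ℝ}
    (hf : ∀ t ∈ Icc a b, HasDerivAt f (f' t) t) (hB : ∀ t, HasDerivAt B (B' t) t)
    (ha : ‖f a‖ ≤ B a) (bound : ∀ t ∈ Icc a b, ‖f' t‖ ≤ B' t) :
    ∀ t ∈ Icc a b, ‖f t‖ ≤ B t := fun _ ht =>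
  image_norm_le_of_norm_deriv_right_le_deriv_boundary
    (fun t ht => (hf t ht).continuousAt.continuousWithinAt)
    (fun t ht => (hf t (Ico_subset_Icc_self ht)).hasDerivWithinAt) ha hB
    (fun t ht => bound t (Ico_subset_Icc_self ht)) ht

variable {f f' f'' : ℝ → E} {D K b : ℝ}

theorem norm_sub_le_of_norm_deriv_le_mul_exp (hK : K ≠ 0)
    (hf : ∀ t ∈ Icc 0 b, HasDerivAt f (f' t) t)
    (bound : ∀ t ∈ Icc 0 b, ‖f' t‖ ≤ D * exp (K * t)) :
    ∀ t ∈ Icc 0 b, ‖f t - f 0‖ ≤ D / K * (exp (K * t) - 1) := by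
  refine norm_le_of_hasDerivAt_of_norm_deriv_le (fun t ht => (hf t ht).sub_const (f 0))
    (B' := fun t => D * exp (K * t)) (fun t => ?_) (by simp) bound
  refine ((((hasDerivAt_id t).const_mul K).exp.sub_const 1).const_mul (D / K)).congr_deriv ?_
  field_simp
  simp

theorem norm_sub_sub_smul_le_of_norm_deriv2_le_mul_exp (hK : K ≠ 0)
    (hf : ∀ t ∈ Icc 0 b, HasDerivAt f (f' t) t) (hf' : ∀ t ∈ Icc 0 b, HasDerivAt f' (f'' t) t)
    (bound : ∀ t ∈ Icc 0 b, ‖f'' t‖ ≤ D * exp (K * t)) :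
    ∀ t ∈ Icc 0 b, ‖f t - f 0 - t • f' 0‖ ≤ D / K ^ 2 * (exp (K * t) - 1 - K * t) := by
  refine norm_le_of_hasDerivAt_of_norm_deriv_le
    (fun t ht => ((hf t ht).sub_const (f 0)).sub ((hasDerivAt_id t).smul_const (f' 0)))
    (B' := fun t => D / K * (exp (K * t) - 1)) (fun t => ?_) (by simp) ?_
  · refine ((((hasDerivAt_id t).const_mul K).exp.sub_const 1 |>.sub
      ((hasDerivAt_id t).const_mul K)).const_mul (D / K ^ 2)).congr_deriv ?_
    field_simp
    simp
  · simpa using norm_sub_le_of_norm_deriv_le_mul_exp hK hf' bound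

end MeanValue

section SecondOrder

variable {𝔸 : Type*} [NormedRing 𝔸] [NormedSpace ℝ 𝔸]

theorem norm_le_mul_exp_of_hasDerivAt_deriv_eq_neg_mul {R J J' : ℝ → 𝔸} {C δ b : ℝ}
    (hR : ∀ t ∈ Icc 0 b, ‖R t‖ ≤ C)
    (hJ : ∀ t ∈ Icc 0 b, HasDerivAt J (J' t) t)
    (hJ' : ∀ t ∈ Icc 0 b, HasDerivAt J' (-(R t * J t)) t)
    (h₀ : max ‖J 0‖ ‖J' 0‖ ≤ δ) :
    ∀ t ∈ Icc 0 b, ‖J t‖ ≤ δ * exp (max 1 C * t) := by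
  have hpair : ∀ t ∈ Icc 0 b,
      HasDerivAt (fun t => (J t, J' t)) (J' t, -(R t * J t)) t := fun t ht =>
    (hJ t ht).prodMk (hJ' t ht)
  intro t ht
  have H := norm_le_gronwallBound_of_norm_deriv_right_le (K := max 1 C) (ε := 0)
    (fun t ht => (hpair t ht).continuousAt.continuousWithinAt)
    (fun t ht => (hpair t (Ico_subset_Icc_self ht)).hasDerivWithinAt) h₀
    (fun s hs => ?_) t ht
  · rw [gronwallBound_ε0, sub_zero] at H
    exact (norm_fst_le (J t, J' t)).trans H
  · have hs' := Ico_subset_Icc_self hs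
    have hJs : ‖J s‖ ≤ ‖(J s, J' s)‖ := norm_fst_le (J s, J' s)
    have hJ's : ‖J' s‖ ≤ ‖(J s, J' s)‖ := norm_snd_le (J s, J' s)
    rw [add_zero, Prod.norm_def, norm_neg]
    refine max_le ?_ ?_
    · exact hJ's.trans (le_mul_of_one_le_left (norm_nonneg _) (le_max_left _ _))
    · calc ‖R s * J s‖ ≤ ‖R s‖ * ‖J s‖ := norm_mul_le _ _
        _ ≤ max 1 C * ‖(J s, J' s)‖ :=
          mul_le_mul ((hR s hs').trans (le_max_right _ _)) hJs (norm_nonneg _)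
            (zero_le_one.trans (le_max_left _ _))

end SecondOrder

theorem exp_max_one_sub_one_sub_le {C : ℝ} (hC : 0 ≤ C) :
    exp (max 1 C) - 1 - max 1 C ≤ max 1 C ^ 2 * exp C := by
  rcases le_total C 1 with h | h
  · rw [max_eq_left h, one_pow, one_mul]
    linarith [exp_one_lt_d9, one_le_exp hC]
  · rw [max_eq_right h]
    calc exp C - 1 - C ≤ exp C := by linarith
      _ ≤ C ^ 2 * exp C := le_mul_of_one_le_left (exp_pos C).le (one_le_pow₀ h)

theorem stmt_3_general {n : ℕ} (C : ℝ)
    (R J J' : ℝ → (EuclideanSpace ℝ (Fin n) →L[ℝ] EuclideanSpace ℝ (Fin n)))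
    (hRbound : ∀ t ∈ Set.Icc (0:ℝ) 1, ‖R t‖ ≤ C)
    (hJ : ∀ t ∈ Set.Icc (0:ℝ) 1, HasDerivAt J (J' t) t)
    (hJ' : ∀ t ∈ Set.Icc (0:ℝ) 1, HasDerivAt J' (-(R t * J t)) t)
    (hJ0 : J 0 = 0) (hJ'0 : J' 0 = 1) :
    ‖J 1 - 1‖ ≤ C * Real.exp C := by
  set K := max 1 C
  have hC : 0 ≤ C := (norm_nonneg _).trans (hRbound 0 (left_mem_Icc.2 zero_le_one))
  have hK : 0 < K := zero_lt_one.trans_le (le_max_left _ _)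
  have hJ₀ : max ‖J 0‖ ‖J' 0‖ ≤ 1 := by
    rw [hJ0, hJ'0, norm_zero]
    exact max_le zero_le_one ContinuousLinearMap.norm_id_le
  have hJ_le : ∀ t ∈ Icc (0:ℝ) 1, ‖J t‖ ≤ exp (K * t) := fun t ht => by
    simpa using norm_le_mul_exp_of_hasDerivAt_deriv_eq_neg_mul hRbound hJ hJ' hJ₀ t ht
  have hJ''_le : ∀ t ∈ Icc (0:ℝ) 1, ‖-(R t * J t)‖ ≤ C * exp (K * t) := fun t ht => by
    rw [norm_neg]
    exact (norm_mul_le _ _).trans (mul_le_mul (hRbound t ht) (hJ_le t ht) (norm_nonneg _) hC)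
  have H := norm_sub_sub_smul_le_of_norm_deriv2_le_mul_exp hK.ne' hJ hJ' hJ''_le 1
    (right_mem_Icc.2 zero_le_one)
  rw [hJ0, hJ'0, sub_zero, one_smul, mul_one] at H
  calc ‖J 1 - 1‖ ≤ C / K ^ 2 * (exp K - 1 - K) := H
    _ ≤ C * exp C := by
      rw [div_mul_eq_mul_div, div_le_iff₀ (by positivity), mul_assoc, mul_comm (exp C)]
      exact mul_le_mul_of_nonneg_left (exp_max_one_sub_one_sub_le hC) hC

/-- Matrices `Mat_n(ℝ)` with the operator norm, realized as continuous linear endomorphisms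
of Euclidean space. If `J'' + R J = 0` on `[0,1]` with `J(0) = 0`, `J'(0) = I`, and
`‖R(t)‖ ≤ C`, then `‖J(1) − I‖ ≤ C e^C`. -/
theorem stmt_3 {n : ℕ} (C : ℝ) (hC : 0 ≤ C)
    (R J J' : ℝ → (EuclideanSpace ℝ (Fin n) →L[ℝ] EuclideanSpace ℝ (Fin n)))
    (hRcont : ContinuousOn R (Set.Icc 0 1))
    (hRbound : ∀ t ∈ Set.Icc (0:ℝ) 1, ‖R t‖ ≤ C)
    (hJ : ∀ t ∈ Set.Icc (0:ℝ) 1, HasDerivAt J (J' t) t)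
    (hJ' : ∀ t ∈ Set.Icc (0:ℝ) 1, HasDerivAt J' (-(R t * J t)) t)
    (hJ0 : J 0 = 0) (hJ'0 : J' 0 = 1) :
    ‖J 1 - 1‖ ≤ C * Real.exp C :=
  stmt_3_general C R J J' hRbound hJ hJ' hJ0 hJ'0
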